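/- arXiv:2012.11030 — 2 statements merged into one kernel-verified Lean document; each statement's English description precedes it below -/
import Mathlib

section
/- Let V be a finite set with |V| = n ≥ 3 and let f be a nontrivial linking function on V. Then f is weak if and only if f links V in a star, i.e., f equals the star function pOI for some ordered partition ({p},O,I) of V with O,I nonempty. -/
open scoped Classical

section Defs

variable {V : Type*} {W : Type*}

/-- A map `V³ → ℤ` alternating in its arguments. -/
def IsAlt (f : V → V → V → ℤ) : Prop :=
  (∀ a b c, f b a c = - f a b c) ∧ (∀ a b c, f a c b = - f a b c)

/-- The simplicial cocycle identity. -/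
def IsCocycle (f : V → V → V → ℤ) : Prop :=
  ∀ a b c d, f b c d - f a c d + f a b d - f a b c = 0

/-- A linking function on `V`. -/
def IsLinkingFun (f : V → V → V → ℤ) : Prop := IsAlt f ∧ IsCocycle f

/-- A cycle in the complete graph on `V`: a list of at least 3 distinct vertices. -/
def IsCycle (C : List V) : Prop := C.Nodup ∧ 3 ≤ C.length

/-- The value of `f` on a cycle, via the standard triangulation
`f(C) = ∑_{i=1}^{k-2} f(v₀, vᵢ, vᵢ₊₁)`. -/
def cycleVal (f : V → V → V → ℤ) : List V → ℤ
  | [] => 0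
  | v :: rest => ∑ i ∈ Finset.range (rest.length - 1),
      f v (rest.getD i v) (rest.getD (i + 1) v)

/-- `f` is weak: `|f(C)| ≤ 1` for every cycle `C`. -/
def IsWeak (f : V → V → V → ℤ) : Prop :=
  ∀ C : List V, IsCycle C → |cycleVal f C| ≤ 1

/-- `f` is nontrivial: `f(C) ≠ 0` for some cycle `C`. -/
def IsNontrivial (f : V → V → V → ℤ) : Prop :=
  ∃ C : List V, IsCycle C ∧ cycleVal f C ≠ 0

noncomputable def starEdge (O I : Set V) (x y : V) : ℤ :=
  (if x ∈ O ∧ y ∈ I then 1 else 0) - (if x ∈ I ∧ y ∈ O then 1 else 0)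

/-- The star function `pOI`: the alternating function with value `1` on `(p,q,r)`
for `q ∈ O`, `r ∈ I`, and value `0` on triples not of this form up to reorientation. -/
noncomputable def starFun (p : V) (O I : Set V) (a b c : V) : ℤ :=
  (if a = p then starEdge O I b c else 0)
    - (if b = p then starEdge O I a c else 0)
    + (if c = p then starEdge O I a b else 0)

/-- `({p}, O, I)` is an ordered partition of `V` into three nonempty parts. -/
def IsStarPartition (p : V) (O I : Set V) : Prop :=
  O.Nonempty ∧ I.Nonempty ∧ p ∉ O ∧ p ∉ I ∧ Disjoint O I ∧
    insert p (O ∪ I) = (Set.univ : Set V)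

/-- A bilinking form between `V` and `W`. -/
def IsBilinking (lam : V → V → V → W → W → W → ℤ) : Prop :=
  (∀ u v w, IsLinkingFun (fun a b c => lam a b c u v w)) ∧
  (∀ a b c, IsLinkingFun (lam a b c))

/-- The value of a bilinking form on a pair of cycles. -/
def biCycleVal (lam : V → V → V → W → W → W → ℤ) (C : List V) (D : List W) : ℤ :=
  cycleVal (fun a b c => cycleVal (lam a b c) D) C

/-- `K_V` and `K_W` are weakly linked under `lam`. -/
def WeaklyLinked (lam : V → V → V → W → W → W → ℤ) : Prop :=
  (∀ (C : List V) (D : List W), IsCycle C → IsCycle D → |biCycleVal lam C D| ≤ 1) ∧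
  ∃ (C : List V) (D : List W), IsCycle C ∧ IsCycle D ∧ biCycleVal lam C D ≠ 0

end Defs


section Aux

variable {V : Type*}

lemma cv3 (f : V → V → V → ℤ) (a b c : V) : cycleVal f [a,b,c] = f a b c := by
  simp [cycleVal]

lemma cv4 (f : V → V → V → ℤ) (a b c d : V) :
    cycleVal f [a,b,c,d] = f a b c + f a c d := by
  simp [cycleVal, Finset.sum_range_succ]

lemma cv5 (f : V → V → V → ℤ) (a b c d e : V) :
    cycleVal f [a,b,c,d,e] = f a b c + f a c d + f a d e := by
  simp [cycleVal, Finset.sum_range_succ]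

lemma cv6 (f : V → V → V → ℤ) (a b c d e g : V) :
    cycleVal f [a,b,c,d,e,g] = f a b c + f a c d + f a d e + f a e g := by
  simp [cycleVal, Finset.sum_range_succ]

variable {f : V → V → V → ℤ}

lemma lk_s12 (hl : IsLinkingFun f) (a b c : V) : f b a c = - f a b c := hl.1.1 a b c

lemma lk_s23 (hl : IsLinkingFun f) (a b c : V) : f a c b = - f a b c := hl.1.2 a b c

lemma lk_rot (hl : IsLinkingFun f) (a b c : V) : f b c a = f a b c := by
  have h1 := hl.1.1 a b c
  have h2 := hl.1.2 b a c
  omega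

lemma lk_deg1 (hl : IsLinkingFun f) (a c : V) : f a a c = 0 := by
  have := hl.1.1 a a c; omega

lemma lk_deg2 (hl : IsLinkingFun f) (a b : V) : f a b b = 0 := by
  have := hl.1.2 a b b; omega

lemma lk_deg3 (hl : IsLinkingFun f) (a b : V) : f a b a = 0 := by
  have h1 := hl.1.2 a a b
  have h2 := lk_deg1 hl a b
  omega

lemma lk_deg (hl : IsLinkingFun f) {a b c : V} (h : a = b ∨ a = c ∨ b = c) :
    f a b c = 0 := by
  rcases h with h|h|h
  · rw [h]; exact lk_deg1 hl b c
  · rw [h]; exact lk_deg3 hl c b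
  · rw [h]; exact lk_deg2 hl a c

lemma lk_coc (hl : IsLinkingFun f) (a b c d : V) :
    f b c d = f a c d - f a b d + f a b c := by
  have := hl.2 a b c d; omega

lemma lk_w3 (hw : IsWeak f) {a b c : V} (h1 : a ≠ b) (h2 : a ≠ c) (h3 : b ≠ c) :
    -1 ≤ f a b c ∧ f a b c ≤ 1 := by
  have h := hw [a,b,c] ⟨by simp [*], by simp⟩
  rw [cv3] at h
  exact abs_le.mp h

lemma lk_tri (hl : IsLinkingFun f) (hw : IsWeak f) (a b c : V) :
    -1 ≤ f a b c ∧ f a b c ≤ 1 := by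
  by_cases h1 : a = b
  · rw [lk_deg hl (Or.inl h1)]; omega
  by_cases h2 : a = c
  · rw [lk_deg hl (Or.inr (Or.inl h2))]; omega
  by_cases h3 : b = c
  · rw [lk_deg hl (Or.inr (Or.inr h3))]; omega
  exact lk_w3 hw h1 h2 h3

lemma lk_w4 (hw : IsWeak f) {a b c d : V} (h1 : a ≠ b) (h2 : a ≠ c) (h3 : a ≠ d)
    (h4 : b ≠ c) (h5 : b ≠ d) (h6 : c ≠ d) :
    -1 ≤ f a b c + f a c d ∧ f a b c + f a c d ≤ 1 := by
  have h := hw [a,b,c,d] ⟨by simp [*], by simp⟩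
  rw [cv4] at h
  exact abs_le.mp h

lemma lk_w5 (hw : IsWeak f) {a b c d e : V} (h1 : a ≠ b) (h2 : a ≠ c) (h3 : a ≠ d)
    (h4 : a ≠ e) (h5 : b ≠ c) (h6 : b ≠ d) (h7 : b ≠ e) (h8 : c ≠ d) (h9 : c ≠ e)
    (h10 : d ≠ e) :
    -1 ≤ f a b c + f a c d + f a d e ∧ f a b c + f a c d + f a d e ≤ 1 := by
  have h := hw [a,b,c,d,e] ⟨by simp [*], by simp⟩
  rw [cv5] at h
  exact abs_le.mp h

lemma lk_w6 (hw : IsWeak f) {a b c d e g : V} (h1 : a ≠ b) (h2 : a ≠ c) (h3 : a ≠ d)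
    (h4 : a ≠ e) (h5 : a ≠ g) (h6 : b ≠ c) (h7 : b ≠ d) (h8 : b ≠ e) (h9 : b ≠ g)
    (h10 : c ≠ d) (h11 : c ≠ e) (h12 : c ≠ g) (h13 : d ≠ e) (h14 : d ≠ g)
    (h15 : e ≠ g) :
    -1 ≤ f a b c + f a c d + f a d e + f a e g ∧
      f a b c + f a c d + f a d e + f a e g ≤ 1 := by
  have h := hw [a,b,c,d,e,g] ⟨by simp [*], by simp⟩
  rw [cv6] at h
  exact abs_le.mp h

lemma lk_exAB (hl : IsLinkingFun f) (hw : IsWeak f) {a b c d : V}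
    (hab : a ≠ b) (hac : a ≠ c) (had : a ≠ d) (hbc : b ≠ c) (hbd : b ≠ d)
    (hcd : c ≠ d) (h1 : f a b c = 1) (k1 : f b c d ≠ 0) (k2 : f c a d ≠ 0) :
    False := by
  have t1 := lk_tri hl hw a c d
  have t2 := lk_tri hl hw a b d
  have q1 := lk_w4 hw hab hac had hbc hbd hcd
  have q2 := lk_w4 hw hab had hac hbd hbc (fun h => hcd h.symm)
  have q3 := lk_w4 hw hac hab had (fun h => hbc h.symm) hcd hbd
  have e1 := lk_coc hl a b c d
  have e2 := lk_s12 hl a c d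
  have e3 := lk_s23 hl a c d
  have e4 := lk_s23 hl a b c
  omega

lemma lk_exAC (hl : IsLinkingFun f) (hw : IsWeak f) {a b c d : V}
    (hab : a ≠ b) (hac : a ≠ c) (had : a ≠ d) (hbc : b ≠ c) (hbd : b ≠ d)
    (hcd : c ≠ d) (h1 : f a b c = 1) (k1 : f b c d ≠ 0) (k2 : f a b d ≠ 0) :
    False := by
  have t1 := lk_tri hl hw a c d
  have t2 := lk_tri hl hw a b d
  have q1 := lk_w4 hw hab hac had hbc hbd hcd
  have q2 := lk_w4 hw hab had hac hbd hbc (fun h => hcd h.symm)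
  have q3 := lk_w4 hw hac hab had (fun h => hbc h.symm) hcd hbd
  have e1 := lk_coc hl a b c d
  have e3 := lk_s23 hl a c d
  have e4 := lk_s23 hl a b c
  omega

lemma lk_exBC (hl : IsLinkingFun f) (hw : IsWeak f) {a b c d : V}
    (hab : a ≠ b) (hac : a ≠ c) (had : a ≠ d) (hbc : b ≠ c) (hbd : b ≠ d)
    (hcd : c ≠ d) (h1 : f a b c = 1) (k1 : f c a d ≠ 0) (k2 : f a b d ≠ 0) :
    False := by
  have t1 := lk_tri hl hw a c d
  have t2 := lk_tri hl hw a b d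
  have q1 := lk_w4 hw hab hac had hbc hbd hcd
  have q2 := lk_w4 hw hab had hac hbd hbc (fun h => hcd h.symm)
  have q3 := lk_w4 hw hac hab had (fun h => hbc h.symm) hcd hbd
  have e2 := lk_s12 hl a c d
  have e3 := lk_s23 hl a c d
  have e4 := lk_s23 hl a b c
  omega

lemma lk_ex6 (hl : IsLinkingFun f) (hw : IsWeak f) {a b c d1 d2 d3 : V}
    (hab : a ≠ b) (hac : a ≠ c) (h1a : d1 ≠ a) (h2a : d2 ≠ a) (h3a : d3 ≠ a)
    (hbc : b ≠ c) (h1b : d1 ≠ b) (h2b : d2 ≠ b) (h3b : d3 ≠ b)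
    (h1c : d1 ≠ c) (h2c : d2 ≠ c) (h3c : d3 ≠ c)
    (h12 : d1 ≠ d2) (h13 : d1 ≠ d3) (h23 : d2 ≠ d3)
    (h1 : f a b c = 1) (k1 : f b c d1 ≠ 0) (k2 : f c a d2 ≠ 0)
    (k3 : f a b d3 ≠ 0) : False := by
  have t1 := lk_tri hl hw a c d2
  have t2 := lk_tri hl hw a b d1
  have t3 := lk_tri hl hw a c d1
  have t4 := lk_tri hl hw a b d3
  have c1 := lk_w4 hw hab hac (fun h => h2a h.symm) hbc (fun h => h2b h.symm)
    (fun h => h2c h.symm)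
  have c2 := lk_w4 hw hab (fun h => h1a h.symm) hac (fun h => h1b h.symm) hbc
    h1c
  have c3 := lk_w4 hw hac hab (fun h => h3a h.symm) (fun h => hbc h.symm)
    (fun h => h3c h.symm) (fun h => h3b h.symm)
  have c4 := lk_w6 hw (a := a) (b := d2) (c := c) (d := d1) (e := b) (g := d3)
    (fun h => h2a h.symm) hac (fun h => h1a h.symm) hab (fun h => h3a h.symm)
    h2c (fun h => h12 h.symm) h2b h23 (fun h => h1c h.symm) (fun h => hbc h.symm) (fun h => h3c h.symm) h1b h13
    (fun h => h3b h.symm)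
  have e1 := lk_coc hl a b c d1
  have e2 := lk_s12 hl a c d2
  have r1 := lk_s23 hl a c d2
  have r2 := lk_s23 hl a c d1
  have r3 := lk_s23 hl a b d1
  have r4 := lk_s23 hl a b c
  omega

lemma lk_master5 (hl : IsLinkingFun f) (hw : IsWeak f) {a b c d e : V}
    (hab : a ≠ b) (hac : a ≠ c) (had : a ≠ d) (hae : a ≠ e)
    (hbc : b ≠ c) (hbd : b ≠ d) (hbe : b ≠ e) (hcd : c ≠ d) (hce : c ≠ e)
    (hde : d ≠ e) (h1 : f a b c = 1) (hd : f b c d = 0) (he : f b c e = 0) :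
    f b d e = 0 := by
  have c1 := lk_w5 hw (a := a) (b := b) (c := d) (d := e) (e := c)
    hab had hae hac hbd hbe hbc hde hcd.symm hce.symm
  have c2 := lk_w5 hw (a := a) (b := b) (c := e) (d := d) (e := c)
    hab hae had hac hbe hbd hbc (fun h => hde h.symm) hce.symm hcd.symm
  have eqd := lk_coc hl a b c d
  have eqe := lk_coc hl a b c e
  have tgt := lk_coc hl a b d e
  have r1 := lk_s23 hl a c e
  have r2 := lk_s23 hl a d e
  have r3 := lk_s23 hl a c d
  omega

lemma lk_master (hl : IsLinkingFun f) (hw : IsWeak f) {a b c : V}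
    (hab : a ≠ b) (hac : a ≠ c) (hbc : b ≠ c) (h1 : f a b c = 1)
    (h0 : ∀ d, d ≠ a → d ≠ b → d ≠ c → f b c d = 0) :
    ∀ x y z, x ≠ a → y ≠ a → z ≠ a → f x y z = 0 := by
  have K : ∀ d e, d ≠ a → d ≠ b → e ≠ a → e ≠ b → f b d e = 0 := by
    intro d e hda hdb hea heb
    by_cases hde : d = e
    · rw [hde]; exact lk_deg2 hl b e
    by_cases hdc : d = c
    · rw [hdc]; exact h0 e hea heb (fun h => hde (hdc.trans h.symm))
    by_cases hec : e = c
    · rw [hec, lk_s23 hl b c d, h0 d hda hdb hdc, neg_zero]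
    · exact lk_master5 hl hw hab hac (fun h => hda h.symm) (fun h => hea h.symm)
        hbc (fun h => hdb h.symm) (fun h => heb h.symm)
        (fun h => hdc h.symm) (fun h => hec h.symm) hde h1
        (h0 d hda hdb hdc) (h0 e hea heb hec)
  intro x y z hx hy hz
  by_cases hxy : x = y
  · exact lk_deg hl (Or.inl hxy)
  by_cases hxz : x = z
  · exact lk_deg hl (Or.inr (Or.inl hxz))
  by_cases hyz : y = z
  · exact lk_deg hl (Or.inr (Or.inr hyz))
  by_cases hxb : x = b
  · rw [hxb]
    exact K y z hy (fun h => hxy (hxb.trans h.symm)) hz (fun h => hxz (hxb.trans h.symm))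
  by_cases hyb : y = b
  · rw [hyb, lk_s12 hl b x z, K x z hx hxb hz (fun h => hyz (hyb.trans h.symm)), neg_zero]
  by_cases hzb : z = b
  · rw [hzb, lk_rot hl b x y]
    exact K x y hx hxb hy hyb
  · rw [lk_coc hl b x y z, K y z hy hyb hz hzb, K x z hx hxb hz hzb,
      K x y hx hxb hy hyb]
    norm_num

lemma lk_triangle (hl : IsLinkingFun f) (hw : IsWeak f) (hnt : IsNontrivial f) :
    ∃ a b c, a ≠ b ∧ a ≠ c ∧ b ≠ c ∧ f a b c = 1 := by
  obtain ⟨C, ⟨hnd, hlen⟩, hne⟩ := hnt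
  cases C with
  | nil => simp at hlen
  | cons v rest =>
    have hcv : cycleVal f (v :: rest) = ∑ i ∈ Finset.range (rest.length - 1),
        f v (rest.getD i v) (rest.getD (i+1) v) := rfl
    rw [hcv] at hne
    obtain ⟨i, _, hfi⟩ := Finset.exists_ne_zero_of_sum_ne_zero hne
    set y := rest.getD i v with hy
    set z := rest.getD (i+1) v with hz
    have h1 : v ≠ y := fun h => hfi (lk_deg hl (Or.inl h))
    have h2 : v ≠ z := fun h => hfi (lk_deg hl (Or.inr (Or.inl h)))
    have h3 : y ≠ z := fun h => hfi (lk_deg hl (Or.inr (Or.inr h)))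
    have hb := lk_w3 hw h1 h2 h3
    rcases (show f v y z = 1 ∨ f v y z = -1 by omega) with h|h
    · exact ⟨v, y, z, h1, h2, h3, h⟩
    · refine ⟨v, z, y, h2, h1, fun hh => h3 hh.symm, ?_⟩
      rw [lk_s23 hl v y z, h]
      norm_num

lemma lk_build (hl : IsLinkingFun f) (hw : IsWeak f) {p q r : V}
    (hpq : p ≠ q) (hpr : p ≠ r) (hqr : q ≠ r) (h1 : f p q r = 1)
    (van : ∀ x y z, x ≠ p → y ≠ p → z ≠ p → f x y z = 0) :
    ∃ O I : Set V, IsStarPartition p O I ∧ f = starFun p O I := by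
  have hstep : ∀ x y, x ≠ p → y ≠ p → f p x y = f p q y - f p q x := by
    intro x y hx hy
    have hc := lk_coc hl p q x y
    have h0 : f q x y = 0 := van q x y hpq.symm hx hy
    have e1 := lk_s12 hl p q y
    have e2 := lk_s12 hl p q x
    omega
  have hb : ∀ x, x ≠ p → f p q x = 0 ∨ f p q x = 1 := by
    intro x hx
    by_cases hxq : x = q
    · left; rw [hxq]; exact lk_deg2 hl p q
    by_cases hxr : x = r
    · right; rw [hxr]; exact h1
    have t1 := lk_tri hl hw p q x
    have t2 := lk_tri hl hw p x r
    have t3 := hstep x r hx hpr.symm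
    have t4 : f p q r = 1 := h1
    omega
  set O : Set V := {x | x ≠ p ∧ f p q x = 0} with hO
  set I : Set V := {x | x ≠ p ∧ f p q x = 1} with hI
  have hqO : q ∈ O := ⟨hpq.symm, lk_deg2 hl p q⟩
  have hrI : r ∈ I := ⟨hpr.symm, h1⟩
  have key : ∀ x y, x ≠ p → y ≠ p → starEdge O I x y = f p q y - f p q x := by
    intro x y hx hy
    rcases hb x hx with h1'|h1' <;> rcases hb y hy with h2'|h2' <;>
      simp [starEdge, hO, hI, Set.mem_setOf_eq, hx, hy, h1', h2']
  have keyp1 : ∀ w, starEdge O I p w = 0 := by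
    intro w; simp [starEdge, hO, hI, Set.mem_setOf_eq]
  have keyp2 : ∀ w, starEdge O I w p = 0 := by
    intro w; simp [starEdge, hO, hI, Set.mem_setOf_eq]
  refine ⟨O, I, ⟨⟨q, hqO⟩, ⟨r, hrI⟩, fun h => h.1 rfl, fun h => h.1 rfl, ?_, ?_⟩, ?_⟩
  · rw [Set.disjoint_left]
    intro x hx1 hx2
    have := hx1.2; have := hx2.2
    omega
  · apply Set.eq_univ_of_forall
    intro x
    by_cases hx : x = p
    · rw [hx]; exact Set.mem_insert p _
    · apply Set.mem_insert_of_mem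
      rcases hb x hx with h|h
      · exact Set.mem_union_left _ ⟨hx, h⟩
      · exact Set.mem_union_right _ ⟨hx, h⟩
  · funext x y z
    by_cases hx : x = p <;> by_cases hy : y = p <;> by_cases hz : z = p
    · rw [hx, hy, hz]
      simp [starFun, keyp1, lk_deg1 hl p p]
    · rw [hx, hy]
      simp [starFun, keyp1, lk_deg1 hl p z]
    · rw [hx, hz]
      simp [starFun, keyp1, keyp2, if_neg hy, lk_deg3 hl p y]
    · rw [hx]
      have hv := hstep y z hy hz
      simp only [starFun, if_pos rfl, if_neg hy, if_neg hz, sub_zero, add_zero]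
      rw [key y z hy hz]
      exact hv
    · rw [hy, hz]
      simp [starFun, keyp2, if_neg hx, lk_deg2 hl x p]
    · rw [hy]
      have e1 := lk_s12 hl p x z
      have e2 := hstep x z hx hz
      simp only [starFun, if_neg hx, if_pos rfl, if_neg hz, if_true]
      rw [key x z hx hz]
      omega
    · rw [hz]
      have e1 := lk_rot hl p x y
      have e2 := hstep x y hx hy
      simp only [starFun, if_neg hx, if_neg hy, if_pos rfl, if_true]
      rw [key x y hx hy]
      omega
    · rw [van x y z hx hy hz]
      simp [starFun, if_neg hx, if_neg hy, if_neg hz]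

lemma lk_star_weak {p : V} {O I : Set V} (hsp : IsStarPartition p O I) :
    IsWeak (starFun p O I) := by
  obtain ⟨hO, hI, hpO, hpI, hdis, hcov⟩ := hsp
  have hφ01 : ∀ x : V, (if x ∈ I then (1:ℤ) else 0) = 0 ∨
      (if x ∈ I then (1:ℤ) else 0) = 1 := by
    intro x; split_ifs <;> simp
  have hcov' : ∀ x : V, x ≠ p → x ∈ O ∨ x ∈ I := by
    intro x hx
    have hx2 : x ∈ insert p (O ∪ I) := by rw [hcov]; trivial
    rcases Set.mem_insert_iff.mp hx2 with h|h
    · exact absurd h hx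
    · exact h
  have hEbound : ∀ x y, -1 ≤ starEdge O I x y ∧ starEdge O I x y ≤ 1 := by
    intro x y
    simp only [starEdge]
    split_ifs <;> norm_num
  have hEφ : ∀ x y, x ≠ p → y ≠ p →
      starEdge O I x y
        = (if y ∈ I then (1:ℤ) else 0) - (if x ∈ I then (1:ℤ) else 0) := by
    intro x y hx hy
    rcases hcov' x hx with h1|h1 <;> rcases hcov' y hy with h2|h2
    · have nx := Set.disjoint_left.mp hdis h1
      have ny := Set.disjoint_left.mp hdis h2
      simp [starEdge, h1, h2, nx, ny]
    · have nx := Set.disjoint_left.mp hdis h1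
      simp [starEdge, h1, h2, nx]
    · have ny := Set.disjoint_left.mp hdis h2
      simp [starEdge, h1, h2, ny]
    · have nx := Set.disjoint_right.mp hdis h1
      have ny := Set.disjoint_right.mp hdis h2
      simp [starEdge, h1, h2, nx, ny]
  intro C hC
  obtain ⟨hnd, hlen⟩ := hC
  cases C with
  | nil => simp at hlen
  | cons v rest =>
    simp only [List.length_cons] at hlen
    have hm : 2 ≤ rest.length := by omega
    have hvr : v ∉ rest := (List.nodup_cons.mp hnd).1
    have hndr : rest.Nodup := (List.nodup_cons.mp hnd).2
    have hcv : cycleVal (starFun p O I) (v :: rest)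
        = ∑ i ∈ Finset.range (rest.length - 1),
            starFun p O I v (rest.getD i v) (rest.getD (i+1) v) := rfl
    rw [hcv]
    have hmem : ∀ i, i < rest.length → rest.getD i v ∈ rest := by
      intro i hi
      rw [List.getD_eq_getElem rest v hi]
      exact List.getElem_mem hi
    by_cases hvp : v = p
    · subst hvp
      have hterm : ∀ i ∈ Finset.range (rest.length - 1),
          starFun v O I v (rest.getD i v) (rest.getD (i+1) v)
          = (if rest.getD (i+1) v ∈ I then (1:ℤ) else 0)
              - (if rest.getD i v ∈ I then (1:ℤ) else 0) := by
        intro i hi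
        rw [Finset.mem_range] at hi
        have n1 : rest.getD i v ≠ v := fun h => hvr (h ▸ hmem i (by omega))
        have n2 : rest.getD (i+1) v ≠ v := fun h => hvr (h ▸ hmem (i+1) (by omega))
        simp only [starFun, if_pos rfl, if_neg n1, if_neg n2, if_true, sub_zero,
          add_zero]
        exact hEφ _ _ n1 n2
      rw [Finset.sum_congr rfl hterm,
        Finset.sum_range_sub (fun i => if rest.getD i v ∈ I then (1:ℤ) else 0)]
      have b1 := hφ01 (rest.getD (rest.length - 1) v)
      have b2 := hφ01 (rest.getD 0 v)
      rw [abs_le]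
      omega
    · by_cases hprest : p ∈ rest
      · obtain ⟨j, hj, hjp⟩ := List.mem_iff_getElem.mp hprest
        have hgj : rest.getD j v = p := by
          rw [List.getD_eq_getElem rest v hj]; exact hjp
        have hiff : ∀ i, i < rest.length → (rest.getD i v = p ↔ i = j) := by
          intro i hi
          constructor
          · intro h
            have h2 : rest[i]'hi = rest[j]'hj := by
              rw [← List.getD_eq_getElem rest v hi, h, hjp]
            exact hndr.getElem_inj_iff.mp h2
          · rintro rfl; exact hgj
        have hterm : ∀ i ∈ Finset.range (rest.length - 1),
            starFun p O I v (rest.getD i v) (rest.getD (i+1) v)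
            = -(if rest.getD i v = p then starEdge O I v (rest.getD (i+1) v)
                  else 0)
              + (if rest.getD (i+1) v = p then starEdge O I v (rest.getD i v)
                  else 0) := by
          intro i hi
          simp only [starFun, if_neg hvp, zero_sub]
        rw [Finset.sum_congr rfl hterm, Finset.sum_add_distrib]
        have hS1 : ∑ i ∈ Finset.range (rest.length - 1),
            -(if rest.getD i v = p then starEdge O I v (rest.getD (i+1) v)
                else 0)
            = if j < rest.length - 1
                then -(starEdge O I v (rest.getD (j+1) v)) else 0 := by
          by_cases hjm : j < rest.length - 1
          · rw [if_pos hjm]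
            have h0 : ∀ b ∈ Finset.range (rest.length - 1), b ≠ j →
                -(if rest.getD b v = p then starEdge O I v (rest.getD (b+1) v)
                    else 0) = 0 := by
              intro b hb hbj
              rw [Finset.mem_range] at hb
              rw [if_neg (fun h => hbj ((hiff b (by omega)).mp h)), neg_zero]
            have h1 : j ∉ Finset.range (rest.length - 1) →
                -(if rest.getD j v = p then starEdge O I v (rest.getD (j+1) v)
                    else 0) = 0 :=
              fun hnot => absurd (Finset.mem_range.mpr hjm) hnot
            rw [Finset.sum_eq_single j h0 h1, if_pos hgj]
          · rw [if_neg hjm]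
            apply Finset.sum_eq_zero
            intro b hb
            rw [Finset.mem_range] at hb
            rw [if_neg (fun h => absurd ((hiff b (by omega)).mp h) (by omega)),
              neg_zero]
        have hS2 : ∑ i ∈ Finset.range (rest.length - 1),
            (if rest.getD (i+1) v = p then starEdge O I v (rest.getD i v)
                else 0)
            = if 1 ≤ j then starEdge O I v (rest.getD (j-1) v) else 0 := by
          by_cases hj1 : 1 ≤ j
          · rw [if_pos hj1]
            have h0 : ∀ b ∈ Finset.range (rest.length - 1), b ≠ j - 1 →
                (if rest.getD (b+1) v = p then starEdge O I v (rest.getD b v)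
                    else 0) = 0 := by
              intro b hb hbj
              rw [Finset.mem_range] at hb
              rw [if_neg (fun h => absurd ((hiff (b+1) (by omega)).mp h)
                (by omega))]
            have h1 : j - 1 ∉ Finset.range (rest.length - 1) →
                (if rest.getD (j-1+1) v = p
                    then starEdge O I v (rest.getD (j-1) v) else 0) = 0 :=
              fun hnot => absurd (Finset.mem_range.mpr (by omega)) hnot
            rw [Finset.sum_eq_single (j-1) h0 h1,
              if_pos (by rw [(by omega : j - 1 + 1 = j)]; exact hgj)]
          · rw [if_neg hj1]
            apply Finset.sum_eq_zero
            intro b hb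
            rw [Finset.mem_range] at hb
            rw [if_neg (fun h => absurd ((hiff (b+1) (by omega)).mp h)
              (by omega))]
        rw [hS1, hS2]
        by_cases hj1 : 1 ≤ j <;> by_cases hjm : j < rest.length - 1
        · rw [if_pos hjm, if_pos hj1]
          have n1 : rest.getD (j+1) v ≠ p := by
            intro h; have := (hiff (j+1) (by omega)).mp h; omega
          have n2 : rest.getD (j-1) v ≠ p := by
            intro h; have := (hiff (j-1) (by omega)).mp h; omega
          rw [hEφ _ _ hvp n1, hEφ _ _ hvp n2]
          have b1 := hφ01 (rest.getD (j+1) v)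
          have b2 := hφ01 (rest.getD (j-1) v)
          have b3 := hφ01 v
          rw [abs_le]
          omega
        · rw [if_neg hjm, if_pos hj1]
          have hb := hEbound v (rest.getD (j-1) v)
          rw [abs_le]
          omega
        · rw [if_pos hjm, if_neg hj1]
          have hb := hEbound v (rest.getD (j+1) v)
          rw [abs_le]
          omega
        · rw [if_neg hjm, if_neg hj1]
          norm_num
      · have hterm : ∀ i ∈ Finset.range (rest.length - 1),
            starFun p O I v (rest.getD i v) (rest.getD (i+1) v) = 0 := by
          intro i hi
          rw [Finset.mem_range] at hi
          have n1 : rest.getD i v ≠ p := fun h => hprest (h ▸ hmem i (by omega))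
          have n2 : rest.getD (i+1) v ≠ p :=
            fun h => hprest (h ▸ hmem (i+1) (by omega))
          simp only [starFun, if_neg hvp, if_neg n1, if_neg n2]
          norm_num
        rw [Finset.sum_congr rfl hterm, Finset.sum_const_zero]
        norm_num

end Aux

/-- a nontrivial linking function on a set with at least 3 elements
is weak iff it links the set in a star. -/
theorem weak_iff_star {V : Type*} [Fintype V] (n : ℕ) (hn : 3 ≤ n)
    (hV : Fintype.card V = n)
    (f : V → V → V → ℤ) (hlin : IsLinkingFun f) (hnt : IsNontrivial f) :
    IsWeak f ↔ ∃ (p : V) (O I : Set V), IsStarPartition p O I ∧ f = starFun p O I := by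
  constructor
  · intro hw
    obtain ⟨a, b, c, hab, hac, hbc, h1⟩ := lk_triangle hlin hw hnt
    by_cases hA : ∀ d, d ≠ a → d ≠ b → d ≠ c → f b c d = 0
    · obtain ⟨O, I, hsp, hfe⟩ := lk_build hlin hw hab hac hbc h1
        (lk_master hlin hw hab hac hbc h1 hA)
      exact ⟨a, O, I, hsp, hfe⟩
    by_cases hB : ∀ d, d ≠ a → d ≠ b → d ≠ c → f c a d = 0
    · have h1' : f b c a = 1 := by rw [lk_rot hlin]; exact h1
      have hB' : ∀ d, d ≠ b → d ≠ c → d ≠ a → f c a d = 0 :=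
        fun d hd1 hd2 hd3 => hB d hd3 hd1 hd2
      obtain ⟨O, I, hsp, hfe⟩ := lk_build hlin hw hbc hab.symm hac.symm h1'
        (lk_master hlin hw hbc hab.symm hac.symm h1' hB')
      exact ⟨b, O, I, hsp, hfe⟩
    by_cases hC : ∀ d, d ≠ a → d ≠ b → d ≠ c → f a b d = 0
    · have h1'' : f c a b = 1 := by rw [lk_rot hlin, lk_rot hlin]; exact h1
      have hC' : ∀ d, d ≠ c → d ≠ a → d ≠ b → f a b d = 0 :=
        fun d hd1 hd2 hd3 => hC d hd2 hd3 hd1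
      obtain ⟨O, I, hsp, hfe⟩ := lk_build hlin hw hac.symm hbc.symm hab h1''
        (lk_master hlin hw hac.symm hbc.symm hab h1'' hC')
      exact ⟨c, O, I, hsp, hfe⟩
    · exfalso
      push_neg at hA hB hC
      obtain ⟨d1, h1a, h1b, h1c, k1⟩ := hA
      obtain ⟨d2, h2a, h2b, h2c, k2⟩ := hB
      obtain ⟨d3, h3a, h3b, h3c, k3⟩ := hC
      have hd12 : d1 ≠ d2 := fun h =>
        lk_exAB hlin hw hab hac h1a.symm hbc h1b.symm h1c.symm h1 k1
          (by rw [h]; exact k2)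
      have hd13 : d1 ≠ d3 := fun h =>
        lk_exAC hlin hw hab hac h1a.symm hbc h1b.symm h1c.symm h1 k1
          (by rw [h]; exact k3)
      have hd23 : d2 ≠ d3 := fun h =>
        lk_exBC hlin hw hab hac h2a.symm hbc h2b.symm h2c.symm h1
          k2 (by rw [h]; exact k3)
      exact lk_ex6 hlin hw hab hac h1a h2a h3a hbc h1b h2b h3b h1c h2c h3c
        hd12 hd13 hd23 h1 k1 k2 k3
  · rintro ⟨p, O, I, hsp, rfl⟩
    exact lk_star_weak hsp
end

section
/- Let λ be a bilinking form between finite sets V and W under which K_V and K_W are weakly linked, with |W| ≥ 3. If C₁ and C₂ are cycles in the complete graph on V each of which links W (i.e., for each i there is a cycle D_i in W with λ(C_i,D_i) ≠ 0), then C₁ and C₂ share a common vertex. -/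
open scoped Classical

/-!
Suppose `C₁` and `C₂` are disjoint. A linking function `f` is a coboundary: for every base point
`x`, `f(C)` is the sum of `f(x, u, v)` over the edges `u → v` of `C`.

Let `F` be a weak linking function on `V` taking the same value `ε = ±1` on disjoint cycles `C₁`
and `C₂`. Splicing them along an edge `a → b` of `C₁` and an edge `d → e` of `C₂` gives a cycle of
value `2ε + F(a,d,b) - F(a,d,e)`, while the 4-cycle `a e d b` has value `F(a,d,b) - F(a,d,e)`, so
weakness forces `F(a,d,b) - F(a,d,e) = -ε` for all such pairs of edges. Summing over all pairs gives
`k (l - 1) = l` for the lengths `k, l ≥ 3`, which is absurd. Reversing `C₂` if necessary, `F`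
therefore vanishes on `C₁` or on `C₂`; for `F = λ(·, D)` this says that `λ(C₁, D) = 0` or
`λ(C₂, D) = 0` for every cycle `D` of `W`.

On the other hand `λ(C₁, ·)` and `λ(C₂, ·)` are nontrivial linking functions on `W`, and two such
functions `g₁`, `g₂` are both nonzero on some cycle. Otherwise a triangle `abc` with
`g₁(a,b,c) ≠ 0` forces `g₂(a, ·, ·)` to vanish on every edge touching `abc`, and a triangle `def`
with `g₂(d,e,f) ≠ 0` forces `g₁(d, ·, ·)` to vanish on every edge touching `def`. Choosing edges
`t t'` of `abc` and `s s'` of `def` where these potentials are nonzero, the 4-cycle `t t' s s'` has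
`g₁`-value `g₁(d,t,t')` and `g₂`-value `g₂(a,s,s')`, both nonzero.
-/

section

variable {V W : Type*}

namespace IsLinkingFun

variable {f : V → V → V → ℤ}

theorem swap₁₂ (hf : IsLinkingFun f) (a b c : V) : f b a c = -f a b c := hf.1.1 a b c

theorem swap₂₃ (hf : IsLinkingFun f) (a b c : V) : f a c b = -f a b c := hf.1.2 a b c

theorem cyclic (hf : IsLinkingFun f) (a b c : V) : f b c a = f a b c := by
  rw [hf.swap₂₃, hf.swap₁₂, hf.swap₂₃, neg_neg]

theorem apply_self_left (hf : IsLinkingFun f) (a c : V) : f a a c = 0 := by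
  linarith [hf.swap₁₂ a a c]

theorem apply_self_right (hf : IsLinkingFun f) (a b : V) : f a b b = 0 := by
  linarith [hf.swap₂₃ a b b]

theorem apply_self_outer (hf : IsLinkingFun f) (a b : V) : f a b a = 0 := by
  rw [← hf.cyclic, hf.apply_self_right]

theorem ne_of_apply_ne_zero (hf : IsLinkingFun f) {a b c : V} (h : f a b c ≠ 0) :
    a ≠ b ∧ a ≠ c ∧ b ≠ c := by
  refine ⟨?_, ?_, ?_⟩ <;> rintro rfl
  exacts [h (hf.apply_self_left _ _), h (hf.apply_self_outer _ _), h (hf.apply_self_right _ _)]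

theorem eq_coboundary (hf : IsLinkingFun f) (x a b c : V) :
    f a b c = f x a b + f x b c + f x c a := by
  linarith [hf.2 x a b c, hf.swap₂₃ x a c]

end IsLinkingFun

theorem IsNontrivial.exists_apply_ne_zero {f : V → V → V → ℤ} (hf : IsNontrivial f) :
    ∃ a b c, f a b c ≠ 0 := by
  obtain ⟨_ | ⟨v, rest⟩, -, hC⟩ := hf
  · exact absurd rfl hC
  · obtain ⟨i, -, hi⟩ := Finset.exists_ne_zero_of_sum_ne_zero hC
    exact ⟨_, _, _, hi⟩

theorem IsCycle.rotate {C : List V} (hC : IsCycle C) (n : ℕ) : IsCycle (C.rotate n) :=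
  ⟨List.nodup_rotate.2 hC.1, (C.length_rotate n).symm ▸ hC.2⟩

theorem IsCycle.reverse {C : List V} (hC : IsCycle C) : IsCycle C.reverse :=
  ⟨List.nodup_reverse.2 hC.1, (C.length_reverse).symm ▸ hC.2⟩

section PathSum

variable (φ : V → V → ℤ)

def pathSum : List V → ℤ
  | a :: b :: t => φ a b + pathSum (b :: t)
  | _ => 0

@[simp] theorem pathSum_nil : pathSum φ [] = 0 := rfl

@[simp] theorem pathSum_singleton (a : V) : pathSum φ [a] = 0 := rfl

@[simp] theorem pathSum_cons_cons (a b : V) (t : List V) :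
    pathSum φ (a :: b :: t) = φ a b + pathSum φ (b :: t) := rfl

def cycleSum (C : List V) : ℤ := pathSum φ (C ++ C.take 1)

def IsCycleEdge (C : List V) (a b : V) : Prop := [a, b] <:+: C ++ C.take 1

theorem pathSum_cons_append_cons (a b : V) (A B : List V) :
    pathSum φ (a :: A ++ b :: B) =
      pathSum φ (a :: A) + φ (A.getLastD a) b + pathSum φ (b :: B) := by
  induction A generalizing a with
  | nil => simp
  | cons x A ih =>
    simp only [List.cons_append, pathSum_cons_cons, List.getLastD_cons]
    rw [← List.cons_append, ih]
    ring

theorem cycleSum_cons (a : V) (A : List V) :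
    cycleSum φ (a :: A) = pathSum φ (a :: A) + φ (A.getLastD a) a := by
  simpa [cycleSum] using pathSum_cons_append_cons φ a a A []

theorem List.getLastD_append_cons (a b : V) (A B : List V) :
    (A ++ b :: B).getLastD a = B.getLastD b := by
  rw [List.getLastD_eq_getLast?, List.getLast?_append_cons, ← List.getLastD_eq_getLast?,
    List.getLastD_cons]

theorem cycleSum_cons_append_cons (a b : V) (A B : List V) :
    cycleSum φ (a :: A ++ b :: B) = cycleSum φ (a :: A) + cycleSum φ (b :: B)
      + φ (A.getLastD a) b + φ (B.getLastD b) a - φ (A.getLastD a) a - φ (B.getLastD b) b := by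
  rw [List.cons_append, cycleSum_cons, List.getLastD_append_cons, ← List.cons_append,
    pathSum_cons_append_cons, cycleSum_cons, cycleSum_cons]
  ring

theorem cycleSum_append_comm (A B : List V) : cycleSum φ (A ++ B) = cycleSum φ (B ++ A) := by
  rcases A with _ | ⟨a, A⟩
  · simp
  rcases B with _ | ⟨b, B⟩
  · simp
  rw [cycleSum_cons_append_cons, cycleSum_cons_append_cons]
  ring

theorem cycleSum_rotate (C : List V) (n : ℕ) : cycleSum φ (C.rotate n) = cycleSum φ C := by
  rcases C with _ | ⟨c, t⟩
  · simp
  rw [← List.rotate_mod, List.rotate_eq_drop_append_take (Nat.mod_lt _ (by simp)).le,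
    cycleSum_append_comm, List.take_append_drop]

theorem pathSum_sub_of_sub_eq {ψ : V → V → ℤ} {g : V → ℤ} (h : ∀ a b, φ a b - ψ a b = g a - g b)
    (a : V) (t : List V) : pathSum φ (a :: t) - pathSum ψ (a :: t) = g a - g (t.getLastD a) := by
  induction t generalizing a with
  | nil => simp
  | cons b t ih => simp only [pathSum_cons_cons, List.getLastD_cons]; linarith [ih b, h a b]

theorem cycleSum_eq_of_sub_eq {ψ : V → V → ℤ} {g : V → ℤ} (h : ∀ a b, φ a b - ψ a b = g a - g b)
    (C : List V) : cycleSum φ C = cycleSum ψ C := by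
  rcases C with _ | ⟨a, t⟩
  · rfl
  have := pathSum_sub_of_sub_eq φ h a (t ++ [a])
  rw [List.getLastD_concat, sub_self, sub_eq_zero] at this
  simpa [cycleSum] using this

theorem pathSum_append_pair (a b : V) (l : List V) :
    pathSum φ (l ++ [a, b]) = pathSum φ (l ++ [a]) + φ a b := by
  induction l with
  | nil => simp
  | cons x l ih => rcases l with _ | ⟨y, l⟩ <;> simp_all [add_assoc]

theorem pathSum_reverse (l : List V) : pathSum φ l.reverse = pathSum (fun a b => φ b a) l := by
  induction l with
  | nil => rfl
  | cons a t ih =>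
    rcases t with _ | ⟨b, t⟩
    · rfl
    rw [List.reverse_cons, List.reverse_cons, List.append_assoc, List.singleton_append,
      pathSum_append_pair, ← List.reverse_cons, ih, pathSum_cons_cons, add_comm]

theorem cycleSum_reverse (C : List V) : cycleSum φ C.reverse = cycleSum (fun a b => φ b a) C := by
  rcases C with _ | ⟨a, t⟩
  · rfl
  rw [List.reverse_cons, cycleSum_append_comm]
  simp only [cycleSum, List.singleton_append, List.take_succ_cons, List.take_zero]
  rw [← pathSum_reverse]
  simp

theorem pathSum_add (ψ : V → V → ℤ) (l : List V) :
    pathSum (fun a b => φ a b + ψ a b) l = pathSum φ l + pathSum ψ l := by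
  induction l with
  | nil => rfl
  | cons a t ih =>
    rcases t with _ | ⟨b, t⟩
    · rfl
    rw [pathSum_cons_cons, pathSum_cons_cons, pathSum_cons_cons, ih]
    ring

theorem pathSum_neg (l : List V) : pathSum (fun a b => -φ a b) l = -pathSum φ l := by
  induction l with
  | nil => rfl
  | cons a t ih =>
    rcases t with _ | ⟨b, t⟩
    · rfl
    rw [pathSum_cons_cons, pathSum_cons_cons, ih, neg_add]

theorem cycleSum_add (ψ : V → V → ℤ) (C : List V) :
    cycleSum (fun a b => φ a b + ψ a b) C = cycleSum φ C + cycleSum ψ C :=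
  pathSum_add φ ψ _

theorem cycleSum_neg (C : List V) : cycleSum (fun a b => -φ a b) C = -cycleSum φ C :=
  pathSum_neg φ _

theorem cycleSum_sub (ψ : V → V → ℤ) (C : List V) :
    cycleSum (fun a b => φ a b - ψ a b) C = cycleSum φ C - cycleSum ψ C := by
  simp only [sub_eq_add_neg, cycleSum_add, cycleSum_neg]

theorem pathSum_congr {φ ψ : V → V → ℤ} {l : List V} (h : ∀ a b, [a, b] <:+: l → φ a b = ψ a b) :
    pathSum φ l = pathSum ψ l := by
  induction l with
  | nil => rfl
  | cons a t ih =>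
    rcases t with _ | ⟨b, t⟩
    · rfl
    rw [pathSum_cons_cons, pathSum_cons_cons, h a b (List.prefix_append [a, b] t).isInfix,
      ih fun c d hcd => h c d (List.infix_cons hcd)]

theorem cycleSum_congr {φ ψ : V → V → ℤ} {C : List V}
    (h : ∀ a b, IsCycleEdge C a b → φ a b = ψ a b) :
    cycleSum φ C = cycleSum ψ C :=
  pathSum_congr h

theorem IsCycleEdge.exists_rotate_eq {C : List V} {a b : V} (h : IsCycleEdge C a b)
    (hC : 2 ≤ C.length) : ∃ n T, C.rotate n = b :: (T ++ [a]) := by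
  obtain ⟨X, Y, hXY⟩ := h
  rcases C with _ | ⟨c, t⟩
  · simp at hC
  rw [List.take_succ_cons, List.take_zero] at hXY
  rcases Y.eq_nil_or_concat with rfl | ⟨Y, y, rfl⟩
  · obtain ⟨hC', hbc⟩ := List.append_inj' (s₁ := X ++ [a]) (t₁ := [b]) (s₂ := c :: t) (t₂ := [c])
      (by simpa using hXY) rfl
    rcases X with _ | ⟨x, T⟩
    · simp [← hC'] at hC
    obtain ⟨rfl, -⟩ := List.cons_eq_cons.1 hC'
    exact ⟨0, T, by simp_all⟩
  · obtain ⟨hC', -⟩ :=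
      List.append_inj' (s₁ := X ++ [a] ++ b :: Y) (t₁ := [y]) (s₂ := c :: t) (t₂ := [c])
        (by simpa using hXY) rfl
    exact ⟨(X ++ [a]).length, Y ++ X, by rw [← hC', List.rotate_append_length_eq]; simp⟩

theorem pathSum_fst (g : V → ℤ) (l : List V) :
    pathSum (fun a _ => g a) l = (l.dropLast.map g).sum := by
  induction l with
  | nil => rfl
  | cons a t ih => rcases t with _ | ⟨b, t⟩ <;> simp_all

theorem cycleSum_fst (g : V → ℤ) (C : List V) : cycleSum (fun a _ => g a) C = (C.map g).sum := by
  rcases C with _ | ⟨a, t⟩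
  · rfl
  rw [cycleSum, List.take_succ_cons, List.take_zero, pathSum_fst, List.dropLast_concat]

theorem cycleSum_const (c : ℤ) (C : List V) : cycleSum (fun _ _ => c) C = C.length * c := by
  simp [cycleSum_fst (fun _ => c)]

theorem cycleSum_list_sum {ι : Type*} (m : List ι) (G : ι → V → V → ℤ) (C : List V) :
    cycleSum (fun a b => (m.map fun i => G i a b).sum) C =
      (m.map fun i => cycleSum (G i) C).sum := by
  induction m with
  | nil => simpa using cycleSum_const 0 C
  | cons i m ih => simp only [List.map_cons, List.sum_cons, cycleSum_add, ih]

end PathSum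

theorem sum_range_getD_eq_pathSum (φ : V → V → ℤ) (d : V) (l : List V) :
    ∑ i ∈ Finset.range (l.length - 1), φ (l.getD i d) (l.getD (i + 1) d) = pathSum φ l := by
  induction l with
  | nil => simp
  | cons a t ih =>
    rcases t with _ | ⟨b, t⟩
    · simp
    simp only [List.length_cons, Nat.add_sub_cancel] at ih ⊢
    rw [Finset.sum_range_succ', pathSum_cons_cons, ← ih, add_comm]
    rfl

theorem cycleVal_cons (f : V → V → V → ℤ) (v : V) (t : List V) :
    cycleVal f (v :: t) = pathSum (f v) t :=
  sum_range_getD_eq_pathSum _ _ _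

theorem cycleVal_three (f : V → V → V → ℤ) (a b c : V) : cycleVal f [a, b, c] = f a b c := by
  simp [cycleVal_cons]

theorem cycleVal_four (f : V → V → V → ℤ) (a b c d : V) :
    cycleVal f [a, b, c, d] = f a b c + f a c d := by
  simp [cycleVal_cons]

namespace IsLinkingFun

variable {f : V → V → V → ℤ}

theorem cycleVal_eq_cycleSum (hf : IsLinkingFun f) (x : V) (C : List V) :
    cycleVal f C = cycleSum (f x) C := by
  rcases C with _ | ⟨v, t⟩
  · rfl
  have hv : cycleSum (f v) (v :: t) = pathSum (f v) t := by
    rcases t with _ | ⟨r, t⟩ <;> simp [cycleSum_cons, hf.apply_self_left, hf.apply_self_outer]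
  rw [cycleVal_cons, ← hv]
  exact cycleSum_eq_of_sub_eq _ (g := f x v)
    (fun a b => by linarith [hf.eq_coboundary x v a b, hf.swap₂₃ x v b]) _

theorem cycleVal_four_eq (hf : IsLinkingFun f) (x a b c d : V) :
    cycleVal f [a, b, c, d] = f x a b + f x b c + f x c d + f x d a := by
  simp [hf.cycleVal_eq_cycleSum x, cycleSum, add_assoc]

theorem cycleVal_rotate (hf : IsLinkingFun f) (C : List V) (n : ℕ) :
    cycleVal f (C.rotate n) = cycleVal f C := by
  rcases C with _ | ⟨v, t⟩
  · simp
  rw [hf.cycleVal_eq_cycleSum v, hf.cycleVal_eq_cycleSum v, cycleSum_rotate]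

theorem cycleVal_reverse (hf : IsLinkingFun f) (C : List V) :
    cycleVal f C.reverse = -cycleVal f C := by
  rcases C with _ | ⟨v, t⟩
  · rfl
  rw [hf.cycleVal_eq_cycleSum v, hf.cycleVal_eq_cycleSum v, cycleSum_reverse, ← cycleSum_neg]
  congr 1
  funext a b
  exact hf.swap₂₃ v a b

end IsLinkingFun

theorem IsLinkingFun.exists_mem_apply_ne_zero {f : V → V → V → ℤ} (hf : IsLinkingFun f) (x : V)
    {a b c : V} (h : f a b c ≠ 0) : ∃ p ∈ [a, b, c], ∃ q ∈ [a, b, c], f x p q ≠ 0 := by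
  by_contra! h0
  apply h
  rw [hf.eq_coboundary x, h0 a (by simp) b (by simp), h0 b (by simp) c (by simp),
    h0 c (by simp) a (by simp), add_zero, add_zero]

section Support

variable {g₁ g₂ : V → V → V → ℤ}

theorem apply_eq_zero_of_support (hg₁ : IsLinkingFun g₁) (hg₂ : IsLinkingFun g₂)
    (hsupp : ∀ D, IsCycle D → cycleVal g₁ D ≠ 0 → cycleVal g₂ D = 0)
    {a b c : V} (h : g₁ a b c ≠ 0) (w : V) : g₂ a c w = 0 := by
  obtain ⟨hab, hac, hbc⟩ := hg₁.ne_of_apply_ne_zero h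
  have habc : g₂ a b c = 0 := by
    simpa [cycleVal_three] using
      hsupp [a, b, c] ⟨by simp [hab, hac, hbc], by simp⟩ (by rwa [cycleVal_three])
  by_cases hwa : w = a
  · rw [hwa, hg₂.apply_self_outer]
  by_cases hwc : w = c
  · rw [hwc, hg₂.apply_self_right]
  by_cases hwb : w = b
  · rw [hwb, hg₂.swap₂₃, habc, neg_zero]
  -- one of the cycles `a c w` and `a b c w` has nonzero `g₁`-value
  by_cases hacw : g₁ a c w = 0
  · have hquad : IsCycle [a, b, c, w] :=
      ⟨by simp [hab, hac, hbc, Ne.symm hwa, Ne.symm hwb, Ne.symm hwc], by simp⟩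
    simpa [cycleVal_four, habc] using hsupp _ hquad (by rwa [cycleVal_four, hacw, add_zero])
  · have htri : IsCycle [a, c, w] := ⟨by simp [hac, Ne.symm hwa, Ne.symm hwc], by simp⟩
    simpa [cycleVal_three] using hsupp _ htri (by rwa [cycleVal_three])

theorem apply_eq_zero_of_mem_triangle (hg₁ : IsLinkingFun g₁) (hg₂ : IsLinkingFun g₂)
    (hsupp : ∀ D, IsCycle D → cycleVal g₁ D ≠ 0 → cycleVal g₂ D = 0)
    {a b c : V} (h : g₁ a b c ≠ 0) {y z : V} (hyz : y ∈ [a, b, c] ∨ z ∈ [a, b, c]) :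
    g₂ a y z = 0 := by
  have hy : ∀ y ∈ [a, b, c], ∀ w, g₂ a y w = 0 := by
    simp only [List.mem_cons, List.not_mem_nil, or_false, forall_eq_or_imp, forall_eq]
    refine ⟨hg₂.apply_self_left a, fun w => ?_, apply_eq_zero_of_support hg₁ hg₂ hsupp h⟩
    have hbca : g₁ b c a ≠ 0 := by rwa [hg₁.cyclic]
    rw [hg₂.swap₁₂, apply_eq_zero_of_support hg₁ hg₂ hsupp hbca, neg_zero]
  rcases hyz with hy' | hz'
  · exact hy y hy' z
  · rw [hg₂.swap₂₃, hy z hz' y, neg_zero]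

theorem exists_isCycle_cycleVal_ne_zero (hg₁ : IsLinkingFun g₁) (hg₂ : IsLinkingFun g₂)
    (hn₁ : IsNontrivial g₁) (hn₂ : IsNontrivial g₂) :
    ∃ D, IsCycle D ∧ cycleVal g₁ D ≠ 0 ∧ cycleVal g₂ D ≠ 0 := by
  by_contra! hsupp
  have hsupp' : ∀ D, IsCycle D → cycleVal g₂ D ≠ 0 → cycleVal g₁ D = 0 :=
    fun D hD h₂ => by_contra fun h₁ => h₂ (hsupp D hD h₁)
  obtain ⟨a, b, c, habc⟩ := hn₁.exists_apply_ne_zero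
  obtain ⟨d, e, f, hdef⟩ := hn₂.exists_apply_ne_zero
  have hT {y z : V} := apply_eq_zero_of_mem_triangle hg₁ hg₂ hsupp habc (y := y) (z := z)
  have hS {y z : V} := apply_eq_zero_of_mem_triangle hg₂ hg₁ hsupp' hdef (y := y) (z := z)
  obtain ⟨t, ht, t', ht', h₁⟩ := hg₁.exists_mem_apply_ne_zero d habc
  obtain ⟨s, hs, s', hs', h₂⟩ := hg₂.exists_mem_apply_ne_zero a hdef
  have htS : t ∉ [d, e, f] := fun h => h₁ (hS (.inl h))
  have ht'S : t' ∉ [d, e, f] := fun h => h₁ (hS (.inr h))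
  have hsT : s ∉ [a, b, c] := fun h => h₂ (hT (.inl h))
  have hs'T : s' ∉ [a, b, c] := fun h => h₂ (hT (.inr h))
  have hD : IsCycle [t, t', s, s'] := by
    refine ⟨?_, by simp⟩
    simp only [List.nodup_cons, List.mem_cons, List.not_mem_nil, or_false, not_or,
      not_false_eq_true, List.nodup_nil, and_true]
    exact ⟨⟨(hg₁.ne_of_apply_ne_zero h₁).2.2, (ne_of_mem_of_not_mem hs htS).symm,
      (ne_of_mem_of_not_mem hs' htS).symm⟩, ⟨(ne_of_mem_of_not_mem hs ht'S).symm,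
      (ne_of_mem_of_not_mem hs' ht'S).symm⟩, (hg₂.ne_of_apply_ne_zero h₂).2.2⟩
  have hv₁ : cycleVal g₁ [t, t', s, s'] = g₁ d t t' := by
    rw [hg₁.cycleVal_four_eq d, hS (.inr hs), hS (.inl hs), hS (.inl hs')]
    ring
  have hv₂ : cycleVal g₂ [t, t', s, s'] = g₂ a s s' := by
    rw [hg₂.cycleVal_four_eq a, hT (.inl ht), hT (.inl ht'), hT (.inr ht)]
    ring
  exact h₂ (hv₂ ▸ hsupp _ hD (hv₁ ▸ h₁))

end Support

section Weak

variable {F : V → V → V → ℤ}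

theorem IsLinkingFun.length_mul_eq_of_forall_edges (hF : IsLinkingFun F) {C₁ C₂ : List V}
    {ε c : ℤ} (hv₁ : cycleVal F C₁ = ε) (hv₂ : cycleVal F C₂ = ε)
    (h : ∀ a b d e, IsCycleEdge C₁ a b → IsCycleEdge C₂ d e → F a d b - F a d e = c) :
    C₁.length * (C₂.length * c + ε) = -(C₂.length * ε) := by
  have hrow : ∀ a b, IsCycleEdge C₁ a b → (C₂.map fun d => F a d b).sum = C₂.length * c + ε := by
    intro a b hab
    have := cycleSum_congr (φ := fun d e => F a d b - F a d e) (ψ := fun _ _ => c)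
      fun d e hde => h a b d e hab hde
    rw [cycleSum_sub, cycleSum_fst, cycleSum_const, ← hF.cycleVal_eq_cycleSum, hv₂] at this
    linarith
  have hcol : ∀ d, cycleSum (fun a b => F a d b) C₁ = -ε := by
    intro d
    rw [show (fun a b => F a d b) = fun a b => -F d a b from funext₂ (hF.swap₁₂ d), cycleSum_neg,
      ← hF.cycleVal_eq_cycleSum, hv₁]
  calc (C₁.length : ℤ) * (C₂.length * c + ε)
      = cycleSum (fun a b => (C₂.map fun d => F a d b).sum) C₁ := by
        rw [cycleSum_congr hrow, cycleSum_const]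
    _ = (C₂.map fun d => cycleSum (fun a b => F a d b) C₁).sum := cycleSum_list_sum _ _ _
    _ = -(C₂.length * ε) := by simp [hcol]

theorem IsWeak.apply_sub_apply_of_splice (hw : IsWeak F) (hF : IsLinkingFun F) {ε : ℤ}
    (hε : ε = 1 ∨ ε = -1) {a b d e : V} {T₁ T₂ : List V} (h₁ : IsCycle (b :: (T₁ ++ [a])))
    (h₂ : IsCycle (e :: (T₂ ++ [d]))) (hd : (b :: (T₁ ++ [a])).Disjoint (e :: (T₂ ++ [d])))
    (hv₁ : cycleVal F (b :: (T₁ ++ [a])) = ε) (hv₂ : cycleVal F (e :: (T₂ ++ [d])) = ε) :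
    F a d b - F a d e = -ε := by
  have hA : IsCycle (b :: (T₁ ++ [a]) ++ e :: (T₂ ++ [d])) :=
    ⟨h₁.1.append h₂.1 hd, by simp; omega⟩
  have hvA : cycleVal F (b :: (T₁ ++ [a]) ++ e :: (T₂ ++ [d])) = 2 * ε + (F a d b - F a d e) := by
    rw [hF.cycleVal_eq_cycleSum a] at hv₁ hv₂ ⊢
    rw [cycleSum_cons_append_cons, hv₁, hv₂]
    simp only [List.getLastD_concat, hF.apply_self_left]
    ring
  have hba : b ≠ a := fun h => (List.nodup_cons.1 h₁.1).1 (by simp [h])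
  have hed : e ≠ d := fun h => (List.nodup_cons.1 h₂.1).1 (by simp [h])
  have hx : ∀ x ∈ b :: (T₁ ++ [a]), ∀ y ∈ e :: (T₂ ++ [d]), x ≠ y :=
    fun x hx y hy hxy => hd hx (hxy ▸ hy)
  have hQ : IsCycle [a, e, d, b] := by
    refine ⟨?_, by simp⟩
    simp only [List.nodup_cons, List.mem_cons, List.not_mem_nil, or_false, not_or,
      not_false_eq_true, List.nodup_nil, and_true]
    exact ⟨⟨hx a (by simp) e (by simp), hx a (by simp) d (by simp), hba.symm⟩,
      ⟨hed, (hx b (by simp) e (by simp)).symm⟩, (hx b (by simp) d (by simp)).symm⟩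
  have hvQ : cycleVal F [a, e, d, b] = F a d b - F a d e := by
    rw [cycleVal_four, hF.swap₂₃ a d e]
    ring
  have hbA := abs_le.1 (hw _ hA)
  have hbQ := abs_le.1 (hw _ hQ)
  rw [hvA] at hbA
  rw [hvQ] at hbQ
  omega

theorem IsWeak.false_of_disjoint (hw : IsWeak F) (hF : IsLinkingFun F) {C₁ C₂ : List V}
    (h₁ : IsCycle C₁) (h₂ : IsCycle C₂) (hd : C₁.Disjoint C₂) {ε : ℤ} (hε : ε = 1 ∨ ε = -1)
    (hv₁ : cycleVal F C₁ = ε) (hv₂ : cycleVal F C₂ = ε) : False := by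
  have hedge : ∀ a b d e, IsCycleEdge C₁ a b → IsCycleEdge C₂ d e → F a d b - F a d e = -ε := by
    intro a b d e hab hde
    obtain ⟨n₁, T₁, hr₁⟩ := hab.exists_rotate_eq (by linarith [h₁.2])
    obtain ⟨n₂, T₂, hr₂⟩ := hde.exists_rotate_eq (by linarith [h₂.2])
    refine hw.apply_sub_apply_of_splice hF hε (hr₁ ▸ h₁.rotate n₁) (hr₂ ▸ h₂.rotate n₂) ?_ ?_ ?_
    · rw [← hr₁, ← hr₂]
      exact fun x hx₁ hx₂ => hd (List.mem_rotate.1 hx₁) (List.mem_rotate.1 hx₂)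
    · rw [← hr₁, hF.cycleVal_rotate, hv₁]
    · rw [← hr₂, hF.cycleVal_rotate, hv₂]
  have key := hF.length_mul_eq_of_forall_edges hv₁ hv₂ hedge
  have hk : (3 : ℤ) ≤ C₁.length := by exact_mod_cast h₁.2
  have hl : (3 : ℤ) ≤ C₂.length := by exact_mod_cast h₂.2
  rcases hε with rfl | rfl <;> nlinarith

theorem IsWeak.cycleVal_eq_zero_or_of_disjoint (hw : IsWeak F) (hF : IsLinkingFun F)
    {C₁ C₂ : List V} (h₁ : IsCycle C₁) (h₂ : IsCycle C₂) (hd : C₁.Disjoint C₂) :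
    cycleVal F C₁ = 0 ∨ cycleVal F C₂ = 0 := by
  by_contra! h
  have hb₁ := abs_le.1 (hw C₁ h₁)
  have hb₂ := abs_le.1 (hw C₂ h₂)
  have hε : cycleVal F C₁ = 1 ∨ cycleVal F C₁ = -1 := by omega
  by_cases hsame : cycleVal F C₂ = cycleVal F C₁
  · exact hw.false_of_disjoint hF h₁ h₂ hd hε rfl hsame
  · exact hw.false_of_disjoint hF h₁ h₂.reverse (List.disjoint_reverse_right.2 hd) hε rfl
      (by rw [hF.cycleVal_reverse]; omega)

end Weak

theorem isLinkingFun_cycleVal {Φ : V → V → V → W → W → W → ℤ}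
    (h : ∀ u v w, IsLinkingFun fun a b c => Φ a b c u v w) (D : List W) :
    IsLinkingFun fun a b c => cycleVal (Φ a b c) D := by
  rcases D with _ | ⟨u, t⟩
  · exact ⟨⟨fun _ _ _ => rfl, fun _ _ _ => rfl⟩, fun _ _ _ _ => by simp [cycleVal]⟩
  refine ⟨⟨fun a b c => ?_, fun a b c => ?_⟩, fun a b c d => ?_⟩ <;>
    simp only [cycleVal, ← Finset.sum_neg_distrib, ← Finset.sum_sub_distrib,
      ← Finset.sum_add_distrib]
  · exact Finset.sum_congr rfl fun i _ => (h _ _ _).1.1 a b c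
  · exact Finset.sum_congr rfl fun i _ => (h _ _ _).1.2 a b c
  · exact Finset.sum_eq_zero fun i _ => (h _ _ _).2 a b c d

theorem biCycleVal_eq_cycleVal_swap (lam : V → V → V → W → W → W → ℤ) (C : List V) (D : List W) :
    biCycleVal lam C D = cycleVal (fun u v w => cycleVal (fun a b c => lam a b c u v w) C) D := by
  rcases C with _ | ⟨v, s⟩ <;> rcases D with _ | ⟨u, t⟩
  all_goals simp only [biCycleVal, cycleVal, Finset.sum_const_zero]
  exact Finset.sum_comm

end

theorem linking_cycles_share_vertex_general {V : Type*} {W : Type*}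
    (lam : V → V → V → W → W → W → ℤ)
    (hbl : IsBilinking lam) (hwl : WeaklyLinked lam)
    (C₁ C₂ : List V) (hC₁ : IsCycle C₁) (hC₂ : IsCycle C₂)
    (hl₁ : ∃ D : List W, IsCycle D ∧ biCycleVal lam C₁ D ≠ 0)
    (hl₂ : ∃ D : List W, IsCycle D ∧ biCycleVal lam C₂ D ≠ 0) :
    ∃ p : V, p ∈ C₁ ∧ p ∈ C₂ := by
  by_contra! hshare
  set G : List V → W → W → W → ℤ := fun C u v w => cycleVal (fun a b c => lam a b c u v w) C
  have hG (C : List V) : IsLinkingFun (G C) := isLinkingFun_cycleVal hbl.2 C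
  have hGn {C : List V} (hl : ∃ D : List W, IsCycle D ∧ biCycleVal lam C D ≠ 0) :
      IsNontrivial (G C) := by
    obtain ⟨D, hD, hCD⟩ := hl
    exact ⟨D, hD, by rwa [← biCycleVal_eq_cycleVal_swap]⟩
  obtain ⟨D, hD, h₁, h₂⟩ := exists_isCycle_cycleVal_ne_zero (hG C₁) (hG C₂) (hGn hl₁) (hGn hl₂)
  have hweak : IsWeak fun a b c => cycleVal (lam a b c) D := fun C hC => hwl.1 C D hC hD
  rcases hweak.cycleVal_eq_zero_or_of_disjoint (isLinkingFun_cycleVal hbl.1 D) hC₁ hC₂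
    (fun p hp₁ hp₂ => hshare p hp₁ hp₂) with h | h
  · exact h₁ (by rwa [← biCycleVal_eq_cycleVal_swap])
  · exact h₂ (by rwa [← biCycleVal_eq_cycleVal_swap])

/-- under a weakly linked bilinking form, any two cycles of `V`
linking `W` share a vertex. -/
theorem linking_cycles_share_vertex {V : Type*} {W : Type*} [Fintype V] [Fintype W]
    (hW : 3 ≤ Fintype.card W)
    (lam : V → V → V → W → W → W → ℤ)
    (hbl : IsBilinking lam) (hwl : WeaklyLinked lam)
    (C₁ C₂ : List V) (hC₁ : IsCycle C₁) (hC₂ : IsCycle C₂)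
    (hl₁ : ∃ D : List W, IsCycle D ∧ biCycleVal lam C₁ D ≠ 0)
    (hl₂ : ∃ D : List W, IsCycle D ∧ biCycleVal lam C₂ D ≠ 0) :
    ∃ p : V, p ∈ C₁ ∧ p ∈ C₂ :=
  linking_cycles_share_vertex_general lam hbl hwl C₁ C₂ hC₁ hC₂ hl₁ hl₂
end
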